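/- Let Ǒ be a Young diagram whose nonzero rows all have odd length (type C*, good parity), let ℘ be a subset of primitive pairs of Ǒ, and let (ı_℘, ȷ_℘) be the bipartition attached to Ǒ and ℘ as in the type-C* recipe. If ℘ ≠ ∅, then there is no valid painted bipartition of type C* on (ı_℘, ȷ_℘); indeed, if (2i−1, 2i) ∈ ℘ then c_i(ı_℘) = (r_{2i−1}(Ǒ)+1)/2 > (r_{2i}(Ǒ)−1)/2 = c_i(ȷ_℘), whereas a painted bipartition of type C* requires c_i(ı_℘) ≤ c_i(ȷ_℘). Hence PBP_{C*}(Ǒ, ℘) = ∅ whenever ℘ ≠ ∅. -/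

import Mathlib

open scoped Classical

/-!
STATEMENT 15: For a type-`C*` orbit `Ǒ` (all nonzero rows odd), and a nonempty
subset `℘` of primitive `C*`-pairs, the set of painted bipartitions
`PBP_{C*}(Ǒ, ℘)` is empty: there is no pair of paintings `(P, Q)` on the
bipartition `(ı_℘, ȷ_℘)` with symbols of `P` in `{•}`, symbols of `Q` in
`{•, s, r}` and identical sets of boxes painted `•`.
-/

/-- The five painting symbols `•, s, r, c, d`. -/
inductive PaintSym : Type
  | bullet | s | r | c | d
deriving DecidableEq

/-- A painting on a set of boxes `cells` (cells `(i, j)` = row `i`, column `j`):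
removing the boxes painted with `{d}`, `{c,d}`, `{r,c,d}`, `{s,r,c,d}` always
leaves a Young diagram (a lower set); every row has at most one `s` and at most
one `r`; every column has at most one `c` and at most one `d`. -/
def IsPainting (cells : Finset (ℕ × ℕ)) (P : ℕ × ℕ → PaintSym) : Prop :=
  IsLowerSet {x : ℕ × ℕ | x ∈ cells ∧ P x ≠ .d} ∧
  IsLowerSet {x : ℕ × ℕ | x ∈ cells ∧ P x ≠ .d ∧ P x ≠ .c} ∧
  IsLowerSet {x : ℕ × ℕ | x ∈ cells ∧ P x ≠ .d ∧ P x ≠ .c ∧ P x ≠ .r} ∧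
  IsLowerSet {x : ℕ × ℕ | x ∈ cells ∧ P x ≠ .d ∧ P x ≠ .c ∧ P x ≠ .r ∧ P x ≠ .s} ∧
  (∀ i : ℕ, (cells.filter (fun x => x.1 = i ∧ P x = .s)).card ≤ 1) ∧
  (∀ i : ℕ, (cells.filter (fun x => x.1 = i ∧ P x = .r)).card ≤ 1) ∧
  (∀ j : ℕ, (cells.filter (fun x => x.2 = j ∧ P x = .c)).card ≤ 1) ∧
  (∀ j : ℕ, (cells.filter (fun x => x.2 = j ∧ P x = .d)).card ≤ 1)

/-- The pair `(c_i(ȷ_℘), c_i(ı_℘))` of `i`-th column lengths of the bipartition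
attached to the row-length function `r` and the subset `℘` of primitive pairs:
`((r(2i)−1)/2, (r(2i−1)+1)/2)` if `(2i−1,2i) ∈ ℘`, `(0,0)` if the pair is
vacant, `((r(2i−1)−1)/2, 0)` if it is tailed (difference positive and odd),
and `((r(2i−1)−1)/2, (r(2i)+1)/2)` otherwise. -/
def colPairSel (r : ℕ → ℕ) (℘ : Finset ℕ) (i : ℕ) : ℕ × ℕ :=
  if i ∈ ℘ then ((r (2*i) - 1) / 2, (r (2*i-1) + 1) / 2)
  else if r (2*i-1) = 0 ∧ r (2*i) = 0 then (0, 0)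
  else if 0 < r (2*i-1) - r (2*i) ∧ (r (2*i-1) - r (2*i)) % 2 = 1 then
    ((r (2*i-1) - 1) / 2, 0)
  else ((r (2*i-1) - 1) / 2, (r (2*i) + 1) / 2)

/-- The set of boxes of the Young diagram with (1-indexed) column lengths
`c 1 ≥ c 2 ≥ ⋯`: the box `(a, b)` (row `a`, column `b`, 0-indexed) is present
iff `a < c (b+1)`. -/
def cellsOfCols (c : ℕ → ℕ) (rowBound colBound : ℕ) : Finset (ℕ × ℕ) :=
  (Finset.range rowBound ×ˢ Finset.range colBound).filter (fun x => x.1 < c (x.2 + 1))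

/-- If `℘` is a nonempty set of primitive `C*`-pairs of `Ǒ` then there is no
painted bipartition of type `C*` on `(ı_℘, ȷ_℘)`:  `PBP_{C*}(Ǒ, ℘) = ∅`. -/
theorem no_painted_bipartition_Cstar_of_nonempty (k : ℕ) (r : ℕ → ℕ)
    (hmono : ∀ i j : ℕ, 1 ≤ i → i ≤ j → r j ≤ r i)
    (hodd : ∀ i : ℕ, 1 ≤ i → r i ≠ 0 → Odd (r i))
    (hvanish : ∀ i : ℕ, 2*k+1 < i → r i = 0)
    (℘ : Finset ℕ)
    (hprim : ∀ i ∈ ℘, 1 ≤ i ∧ 0 < r (2*i-1) - r (2*i) ∧ Even (r (2*i-1) - r (2*i)))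
    (hne : ℘.Nonempty) :
    ¬ ∃ P Q : ℕ × ℕ → PaintSym,
      IsPainting (cellsOfCols (fun i => (colPairSel r ℘ i).2) (r 1 + 1) (k + 2)) P ∧
      IsPainting (cellsOfCols (fun i => (colPairSel r ℘ i).1) (r 1 + 1) (k + 2)) Q ∧
      (∀ x ∈ cellsOfCols (fun i => (colPairSel r ℘ i).2) (r 1 + 1) (k + 2),
        P x = PaintSym.bullet) ∧
      (∀ x ∈ cellsOfCols (fun i => (colPairSel r ℘ i).1) (r 1 + 1) (k + 2),
        Q x ∈ ({PaintSym.bullet, PaintSym.s, PaintSym.r} : Set PaintSym)) ∧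
      (cellsOfCols (fun i => (colPairSel r ℘ i).2) (r 1 + 1) (k + 2)).filter
          (fun x => P x = PaintSym.bullet) =
        (cellsOfCols (fun i => (colPairSel r ℘ i).1) (r 1 + 1) (k + 2)).filter
          (fun x => Q x = PaintSym.bullet) := by
  rintro ⟨P, Q, hPp, hQp, hPb, hQb, hfilt⟩
  obtain ⟨i, hi⟩ := hne
  obtain ⟨hi1, hpos, heven⟩ := hprim i hi
  have hba : r (2*i) < r (2*i-1) := by omega
  have ha0 : r (2*i-1) ≠ 0 := by omega
  have hik : 2*i-1 ≤ 2*k+1 := by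
    by_contra h
    have := hvanish (2*i-1) (by omega)
    omega
  have hb1 : r (2*i) ≤ r 1 := hmono 1 (2*i) (le_refl 1) (by omega)
  set x : ℕ × ℕ := ((r (2*i) - 1)/2, i-1) with hx
  have hcol : x.2 + 1 = i := by simp [hx]; omega
  have hxmem : x ∈ cellsOfCols (fun j => (colPairSel r ℘ j).2) (r 1 + 1) (k+2) := by
    simp only [cellsOfCols, Finset.mem_filter, Finset.mem_product, Finset.mem_range, hcol]
    refine ⟨⟨by simp only [hx]; omega, by omega⟩, ?_⟩
    simp only [colPairSel, if_pos hi, hx]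
    omega
  have hxnot : x ∉ cellsOfCols (fun j => (colPairSel r ℘ j).1) (r 1 + 1) (k+2) := by
    simp only [cellsOfCols, Finset.mem_filter, Finset.mem_product, Finset.mem_range, hcol]
    rintro ⟨-, hlt⟩
    simp only [colPairSel, if_pos hi, hx] at hlt
    omega
  have hxfilt : x ∈ (cellsOfCols (fun j => (colPairSel r ℘ j).2) (r 1 + 1) (k+2)).filter
      (fun y => P y = PaintSym.bullet) :=
    Finset.mem_filter.mpr ⟨hxmem, hPb x hxmem⟩
  rw [hfilt] at hxfilt
  exact hxnot (Finset.mem_filter.mp hxfilt).1
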